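/- arXiv:1610.04590 — 3 statements merged into one kernel-verified Lean document; each statement's English description precedes it below -/
import Mathlib

section
/- NH² triangle inequality: Let a, b, c be points in the Heisenberg group, and let A be the unsigned area of the Euclidean triangle in ℝ² with vertices π(a), π(b), π(c), where π(x,y,z)=(x,y). Then A ≤ NH(a⁻¹b)² + NH(b⁻¹c)² + NH(c⁻¹a)², where NH(x,y,z) = |z|^{1/2}. -/
open MeasureTheory Filter Topology

noncomputable section

abbrev H : Type := ℝ × ℝ × ℝ

/-- Heisenberg group multiplication. -/
def Hmul (p q : H) : H :=
  (p.1 + q.1, p.2.1 + q.2.1, p.2.2 + q.2.2 + (p.1 * q.2.1 - p.2.1 * q.1) / 2)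

/-- Heisenberg group inverse. -/
def Hinv (p : H) : H := (-p.1, -p.2.1, -p.2.2)

/-- Korányi norm. -/
def KN (p : H) : ℝ := ((p.1 ^ 2 + p.2.1 ^ 2) ^ 2 + p.2.2 ^ 2) ^ ((1 : ℝ) / 4)

/-- The non-horizontal component norm. -/
def NH (p : H) : ℝ := |p.2.2| ^ ((1 : ℝ) / 2)

/-- Korányi metric. -/
def Hd (p q : H) : ℝ := KN (Hmul (Hinv q) p)

/-- Horizontal projection. -/
def Hpi (p : H) : ℝ × ℝ := (p.1, p.2.1)

/-- Heisenberg dilation. -/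
def Hdil (r : ℝ) (p : H) : H := (r * p.1, r * p.2.1, r ^ 2 * p.2.2)

/-- Euclidean norm on ℝ². -/
def nrm2 (u : ℝ × ℝ) : ℝ := Real.sqrt (u.1 ^ 2 + u.2 ^ 2)

/-- Korányi distance from a point to the horizontal line through `p` with
horizontal direction `v`. -/
def dLine (a p : H) (v : ℝ × ℝ) : ℝ := ⨅ r : ℝ, Hd a (Hmul p (r * v.1, r * v.2, 0))

/-- Euclidean distance from `v` to the affine line through `u` and `w` in ℝ². -/
def distLine2 (v u w : ℝ × ℝ) : ℝ := ⨅ t : ℝ, nrm2 (v - (u + t • (w - u)))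

/-- Unsigned area of the triangle with vertices `u`, `v`, `w` in ℝ². -/
def triArea (u v w : ℝ × ℝ) : ℝ :=
  |(v.1 - u.1) * (w.2 - u.2) - (v.2 - u.2) * (w.1 - u.1)| / 2

/-- NH² triangle inequality: the area of the projected triangle is bounded by
the sum of the three squared vertical components. -/
theorem NH_sq_triangle_area :
    ∀ a b c : H,
      triArea (Hpi a) (Hpi b) (Hpi c) ≤
        NH (Hmul (Hinv a) b) ^ 2 + NH (Hmul (Hinv b) c) ^ 2 + NH (Hmul (Hinv c) a) ^ 2 := by
  intro a b c
  have hNH : ∀ p : H, NH p ^ 2 = |p.2.2| := by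
    intro p
    rw [NH, ← Real.rpow_natCast (|p.2.2| ^ ((1:ℝ)/2)) 2, ← Real.rpow_mul (abs_nonneg _)]
    norm_num
  rw [hNH, hNH, hNH]
  simp only [triArea, Hpi, Hmul, Hinv]
  set z1 := -a.2.2 + b.2.2 + (-a.1 * b.2.1 - -a.2.1 * b.1) / 2 with hz1
  set z2 := -b.2.2 + c.2.2 + (-b.1 * c.2.1 - -b.2.1 * c.1) / 2 with hz2
  set z3 := -c.2.2 + a.2.2 + (-c.1 * a.2.1 - -c.2.1 * a.1) / 2 with hz3
  have key : |(b.1 - a.1) * (c.2.1 - a.2.1) - (b.2.1 - a.2.1) * (c.1 - a.1)| / 2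
      = |z1 + z2 + z3| := by
    have : z1 + z2 + z3 = -(((b.1 - a.1) * (c.2.1 - a.2.1) - (b.2.1 - a.2.1) * (c.1 - a.1)) / 2) := by
      rw [hz1, hz2, hz3]; ring
    rw [this, abs_neg, abs_div]
    norm_num
  rw [key]
  calc |z1 + z2 + z3| ≤ |z1 + z2| + |z3| := abs_add_le _ _
    _ ≤ |z1| + |z2| + |z3| := by linarith [abs_add_le z1 z2]
end
end

section
/- NH-strip lemma: Let p₁, p₂, p₃ be points in the Heisenberg group with α·r ≤ d(p_i,p_j) ≤ r for all i ≠ j, where 0 < α < 1 and r > 0. Suppose for some ε ∈ (0,1/2) that NH(p_i⁻¹p_j) ≤ ε·d(p_i,p_j) for all i ≠ j. Then for each i, the point π(p_i) ∈ ℝ² lies within Euclidean distance 16·α⁻¹·ε²·r of the line through π(p_{i+1}) and π(p_{i+2}) (indices mod 3). -/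
open MeasureTheory Filter Topology

noncomputable section

lemma rpow_quarter_pow {A : ℝ} (hA : 0 ≤ A) : (A ^ ((1:ℝ)/4)) ^ 4 = A := by
  rw [← Real.rpow_natCast (A ^ ((1:ℝ)/4)) 4, ← Real.rpow_mul hA]
  norm_num

lemma half_sq {z c : ℝ} (h : |z| ^ ((1:ℝ)/2) ≤ c) : |z| ≤ c ^ 2 := by
  have h0 : (0:ℝ) ≤ |z| ^ ((1:ℝ)/2) := Real.rpow_nonneg (abs_nonneg z) _
  have : (|z| ^ ((1:ℝ)/2)) ^ 2 = |z| := by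
    rw [← Real.rpow_natCast (|z| ^ ((1:ℝ)/2)) 2, ← Real.rpow_mul (abs_nonneg z)]
    norm_num
  nlinarith

lemma Hd_nonneg (p q : H) : 0 ≤ Hd p q := by
  unfold Hd KN
  positivity

lemma strip_aux (v u w : ℝ × ℝ) (α r ε : ℝ) (hα : 0 < α) (hr : 0 < r) (hε : 0 < ε)
    (hm' : (α*r/2)^2 ≤ (w.1-u.1)^2+(w.2-u.2)^2)
    (hc : |(v.1-u.1)*(w.2-u.2)-(v.2-u.2)*(w.1-u.1)| ≤ 6*ε^2*r^2) :
    distLine2 v u w ≤ 16 * α⁻¹ * ε ^ 2 * r := by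
  set D1 := w.1-u.1 with hD1
  set D2 := w.2-u.2 with hD2
  set e1 := v.1-u.1 with he1
  set e2 := v.2-u.2 with he2
  have hQ : 0 < D1^2+D2^2 := lt_of_lt_of_le (by positivity) hm'
  set t0 := (e1*D1+e2*D2)/(D1^2+D2^2) with ht0
  have hbdd : BddBelow (Set.range fun t : ℝ => nrm2 (v - (u + t • (w - u)))) := by
    refine ⟨0, ?_⟩
    rintro x ⟨t, rfl⟩
    exact Real.sqrt_nonneg _
  have step : distLine2 v u w ≤ nrm2 (v - (u + t0 • (w-u))) := ciInf_le hbdd t0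
  have hcomp : v - (u + t0 • (w - u)) = (e1 - t0*D1, e2 - t0*D2) := by
    simp [Prod.ext_iff, he1, he2, hD1, hD2, Prod.smul_def, smul_eq_mul]
    constructor <;> ring
  have hkey : (e1 - t0*D1)^2 + (e2 - t0*D2)^2 = (e1*D2 - e2*D1)^2 / (D1^2+D2^2) := by
    rw [ht0]
    field_simp
    ring
  have hsqrt : nrm2 (v - (u + t0 • (w-u))) = |e1*D2 - e2*D1| / Real.sqrt (D1^2+D2^2) := by
    rw [hcomp]
    show Real.sqrt _ = _
    rw [hkey, Real.sqrt_div (sq_nonneg _), Real.sqrt_sq_eq_abs]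
  have hsm2 : α*r/2 ≤ Real.sqrt (D1^2+D2^2) := by
    have := Real.sqrt_le_sqrt hm'
    rwa [Real.sqrt_sq (by positivity)] at this
  have hfin : |e1*D2 - e2*D1| / Real.sqrt (D1^2+D2^2) ≤ (6*ε^2*r^2) / (α*r/2) :=
    div_le_div₀ (by positivity) hc (by positivity) hsm2
  have heq : (6*ε^2*r^2) / (α*r/2) = 12 * α⁻¹ * ε^2 * r := by
    field_simp
    ring
  calc distLine2 v u w ≤ _ := step
    _ = _ := hsqrt
    _ ≤ (6*ε^2*r^2) / (α*r/2) := hfin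
    _ = 12 * α⁻¹ * ε^2 * r := heq
    _ ≤ 16 * α⁻¹ * ε^2 * r := by
        have h : 0 ≤ α⁻¹ * ε ^ 2 * r := by positivity
        nlinarith [h]

lemma horiz_lb {d zz D α r ε : ℝ} (hd : 0 ≤ d) (hD : 0 ≤ D) (hα : 0 < α) (hr : 0 < r)
    (hε : 0 < ε) (hε2 : ε < 1/2)
    (h4 : d^4 = D^2 + zz^2) (hl : α*r ≤ d) (hz : |zz| ≤ ε^2 * d^2) :
    (α*r/2)^2 ≤ D := by
  have h2 : ε^2 ≤ 1/4 := by nlinarith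
  have hε4 : ε^4 ≤ 1/16 := by nlinarith [h2, sq_nonneg ε]
  have hp : (α*r)^4 ≤ d^4 := pow_le_pow_left₀ (by positivity) hl 4
  have hz2 : zz^2 ≤ ε^4 * d^4 := by nlinarith [sq_abs zz, abs_nonneg zz]
  have h4' : ((α*r/2)^2)^2 ≤ D^2 := by nlinarith [pow_nonneg hd 4]
  exact le_of_pow_le_pow_left₀ two_ne_zero hD h4'

/-- NH-strip lemma: if all vertical components are small, each projected point
lies in a narrow strip around the line through the other two projections. -/
theorem NH_strip_lemma :
    ∀ (p₁ p₂ p₃ : H) (α r ε : ℝ), 0 < α → α < 1 → 0 < r → 0 < ε → ε < 1 / 2 →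
      α * r ≤ Hd p₁ p₂ → Hd p₁ p₂ ≤ r →
      α * r ≤ Hd p₂ p₃ → Hd p₂ p₃ ≤ r →
      α * r ≤ Hd p₁ p₃ → Hd p₁ p₃ ≤ r →
      NH (Hmul (Hinv p₁) p₂) ≤ ε * Hd p₁ p₂ →
      NH (Hmul (Hinv p₂) p₃) ≤ ε * Hd p₂ p₃ →
      NH (Hmul (Hinv p₁) p₃) ≤ ε * Hd p₁ p₃ →
      distLine2 (Hpi p₁) (Hpi p₂) (Hpi p₃) ≤ 16 * α⁻¹ * ε ^ 2 * r ∧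
      distLine2 (Hpi p₂) (Hpi p₃) (Hpi p₁) ≤ 16 * α⁻¹ * ε ^ 2 * r ∧
      distLine2 (Hpi p₃) (Hpi p₁) (Hpi p₂) ≤ 16 * α⁻¹ * ε ^ 2 * r := by
  rintro ⟨x₁,y₁,z₁⟩ ⟨x₂,y₂,z₂⟩ ⟨x₃,y₃,z₃⟩ α r ε hα hα1 hr hε hε2 h12l h12u h23l h23u h13l h13u hN12 hN23 hN13
  set ζ₁₂ := z₂ - z₁ - (x₁*y₂ - y₁*x₂)/2 with hζ12
  set ζ₂₃ := z₃ - z₂ - (x₂*y₃ - y₂*x₃)/2 with hζ23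
  set ζ₁₃ := z₃ - z₁ - (x₁*y₃ - y₁*x₃)/2 with hζ13
  set d12 := Hd ((x₁,y₁,z₁):H) (x₂,y₂,z₂) with hd12def
  set d23 := Hd ((x₂,y₂,z₂):H) (x₃,y₃,z₃) with hd23def
  set d13 := Hd ((x₁,y₁,z₁):H) (x₃,y₃,z₃) with hd13def
  have hd12n : 0 ≤ d12 := Hd_nonneg _ _
  have hd23n : 0 ≤ d23 := Hd_nonneg _ _
  have hd13n : 0 ≤ d13 := Hd_nonneg _ _
  -- NH rewrites
  have hNz12 : NH (Hmul (Hinv ((x₁,y₁,z₁):H)) (x₂,y₂,z₂)) = |ζ₁₂| ^ ((1:ℝ)/2) := by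
    have h1 : (Hmul (Hinv ((x₁,y₁,z₁):H)) (x₂,y₂,z₂)).2.2 = ζ₁₂ := by
      simp [Hmul, Hinv, hζ12]; ring
    rw [NH, h1]
  have hNz23 : NH (Hmul (Hinv ((x₂,y₂,z₂):H)) (x₃,y₃,z₃)) = |ζ₂₃| ^ ((1:ℝ)/2) := by
    have h1 : (Hmul (Hinv ((x₂,y₂,z₂):H)) (x₃,y₃,z₃)).2.2 = ζ₂₃ := by
      simp [Hmul, Hinv, hζ23]; ring
    rw [NH, h1]
  have hNz13' : NH (Hmul (Hinv ((x₁,y₁,z₁):H)) (x₃,y₃,z₃)) = |ζ₁₃| ^ ((1:ℝ)/2) := by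
    have h1 : (Hmul (Hinv ((x₁,y₁,z₁):H)) (x₃,y₃,z₃)).2.2 = ζ₁₃ := by
      simp [Hmul, Hinv, hζ13]; ring
    rw [NH, h1]
  rw [hNz12] at hN12
  rw [hNz23] at hN23
  rw [hNz13'] at hN13
  -- fourth power identities
  have hd412 : d12^4 = ((x₂-x₁)^2+(y₂-y₁)^2)^2 + ζ₁₂^2 := by
    have h1 : d12 = (((x₂-x₁)^2+(y₂-y₁)^2)^2 + ζ₁₂^2) ^ ((1:ℝ)/4) := by
      rw [hd12def, Hd, KN]
      congr 1
      simp [Hmul, Hinv, hζ12]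
      ring
    rw [h1, rpow_quarter_pow (by positivity)]
  have hd423 : d23^4 = ((x₃-x₂)^2+(y₃-y₂)^2)^2 + ζ₂₃^2 := by
    have h1 : d23 = (((x₃-x₂)^2+(y₃-y₂)^2)^2 + ζ₂₃^2) ^ ((1:ℝ)/4) := by
      rw [hd23def, Hd, KN]
      congr 1
      simp [Hmul, Hinv, hζ23]
      ring
    rw [h1, rpow_quarter_pow (by positivity)]
  have hd413 : d13^4 = ((x₃-x₁)^2+(y₃-y₁)^2)^2 + ζ₁₃^2 := by
    have h1 : d13 = (((x₃-x₁)^2+(y₃-y₁)^2)^2 + ζ₁₃^2) ^ ((1:ℝ)/4) := by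
      rw [hd13def, Hd, KN]
      congr 1
      simp [Hmul, Hinv, hζ13]
      ring
    rw [h1, rpow_quarter_pow (by positivity)]
  clear_value ζ₁₂ ζ₂₃ ζ₁₃ d12 d23 d13
  clear hd12def hd23def hd13def
  -- vertical bounds
  have hzd12 : |ζ₁₂| ≤ ε^2 * d12^2 := by
    have := half_sq hN12; rw [mul_pow] at this; exact this
  have hzd23 : |ζ₂₃| ≤ ε^2 * d23^2 := by
    have := half_sq hN23; rw [mul_pow] at this; exact this
  have hzd13 : |ζ₁₃| ≤ ε^2 * d13^2 := by
    have := half_sq hN13; rw [mul_pow] at this; exact this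
  have hzr12 : |ζ₁₂| ≤ ε^2 * r^2 := by
    have hsq : d12^2 ≤ r^2 := pow_le_pow_left₀ hd12n h12u 2
    exact hzd12.trans (mul_le_mul_of_nonneg_left hsq (sq_nonneg ε))
  have hzr23 : |ζ₂₃| ≤ ε^2 * r^2 := by
    have hsq : d23^2 ≤ r^2 := pow_le_pow_left₀ hd23n h23u 2
    exact hzd23.trans (mul_le_mul_of_nonneg_left hsq (sq_nonneg ε))
  have hzr13 : |ζ₁₃| ≤ ε^2 * r^2 := by
    have hsq : d13^2 ≤ r^2 := pow_le_pow_left₀ hd13n h13u 2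
    exact hzd13.trans (mul_le_mul_of_nonneg_left hsq (sq_nonneg ε))
  -- horizontal lower bounds
  have hm12 : (α*r/2)^2 ≤ (x₂-x₁)^2+(y₂-y₁)^2 := 
    horiz_lb hd12n (by positivity) hα hr hε hε2 hd412 h12l hzd12
  have hm23 : (α*r/2)^2 ≤ (x₃-x₂)^2+(y₃-y₂)^2 := 
    horiz_lb hd23n (by positivity) hα hr hε hε2 hd423 h23l hzd23
  have hd413' : d13^4 = ((x₁-x₃)^2+(y₁-y₃)^2)^2 + ζ₁₃^2 := by rw [hd413]; ring_nf
  have hm13 : (α*r/2)^2 ≤ (x₁-x₃)^2+(y₁-y₃)^2 := 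
    horiz_lb hd13n (by positivity) hα hr hε hε2 hd413' h13l hzd13
  -- cross products
  obtain ⟨a1,b1⟩ := abs_le.1 hzr12
  obtain ⟨a2,b2⟩ := abs_le.1 hzr23
  obtain ⟨a3,b3⟩ := abs_le.1 hzr13
  have hc1 : |(x₁-x₂)*(y₃-y₂) - (y₁-y₂)*(x₃-x₂)| ≤ 6*ε^2*r^2 := by
    have hid : (x₁-x₂)*(y₃-y₂) - (y₁-y₂)*(x₃-x₂) = 2*ζ₁₂ + 2*ζ₂₃ - 2*ζ₁₃ := by
      rw [hζ12, hζ23, hζ13]; ring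
    rw [hid, abs_le]; constructor <;> linarith
  have hc2 : |(x₂-x₃)*(y₁-y₃) - (y₂-y₃)*(x₁-x₃)| ≤ 6*ε^2*r^2 := by
    have hid : (x₂-x₃)*(y₁-y₃) - (y₂-y₃)*(x₁-x₃) = 2*ζ₁₂ + 2*ζ₂₃ - 2*ζ₁₃ := by
      rw [hζ12, hζ23, hζ13]; ring
    rw [hid, abs_le]; constructor <;> linarith
  have hc3 : |(x₃-x₁)*(y₂-y₁) - (y₃-y₁)*(x₂-x₁)| ≤ 6*ε^2*r^2 := by
    have hid : (x₃-x₁)*(y₂-y₁) - (y₃-y₁)*(x₂-x₁) = 2*ζ₁₂ + 2*ζ₂₃ - 2*ζ₁₃ := by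
      rw [hζ12, hζ23, hζ13]; ring
    rw [hid, abs_le]; constructor <;> linarith
  simp only [Hpi]
  refine ⟨strip_aux _ _ _ α r ε hα hr hε hm23 hc1,
          strip_aux _ _ _ α r ε hα hr hε hm13 hc2,
          strip_aux _ _ _ α r ε hα hr hε hm12 hc3⟩
end
end

section
/- Excess bound via NH (Lemma on ∂ and γ₁): For every α ∈ (0,1) there exists a constant c₁ > 0 (depending only on α) such that: if p₁,p₂,p₃ ∈ ℍ satisfy α·r ≤ d(p_i,p_j) ≤ r for all i ≠ j, then ∂(p₁,p₂,p₃) ≤ c₁·γ₁⁴·r, where ∂(p₁,p₂,p₃) = min over permutations σ of (d(p_{σ(1)},p_{σ(2)}) + d(p_{σ(2)},p_{σ(3)}) − d(p_{σ(1)},p_{σ(3)})) and γ₁ is the maximum of NH(p_i⁻¹p_j)/d(p_i,p_j) over i ≠ j. -/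
open MeasureTheory Filter Topology

noncomputable section

lemma KN_nonneg' (p : H) : 0 ≤ KN p := Real.rpow_nonneg (by positivity) _

lemma KN_pow4' (p : H) : KN p ^ 4 = (p.1 ^ 2 + p.2.1 ^ 2) ^ 2 + p.2.2 ^ 2 := by
  have h : (0:ℝ) ≤ (p.1 ^ 2 + p.2.1 ^ 2) ^ 2 + p.2.2 ^ 2 := by positivity
  rw [KN, ← Real.rpow_natCast (_ ^ ((1:ℝ)/4)) 4, ← Real.rpow_mul h]
  norm_num

lemma NH_nonneg' (p : H) : 0 ≤ NH p := Real.rpow_nonneg (abs_nonneg _) _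

lemma NH_pow4' (p : H) : NH p ^ 4 = p.2.2 ^ 2 := by
  rw [NH, ← Real.rpow_natCast (_ ^ ((1:ℝ)/2)) 4, ← Real.rpow_mul (abs_nonneg _)]
  norm_num [Real.rpow_natCast, sq_abs]

lemma sqrt_tri' (u1 u2 v1 v2 : ℝ) :
    Real.sqrt ((u1+v1)^2+(u2+v2)^2) ≤ Real.sqrt (u1^2+u2^2) + Real.sqrt (v1^2+v2^2) := by
  set a := Real.sqrt (u1^2+u2^2) with ha
  set b := Real.sqrt (v1^2+v2^2) with hb
  have ha0 : 0 ≤ a := Real.sqrt_nonneg _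
  have hb0 : 0 ≤ b := Real.sqrt_nonneg _
  have ha2 : a^2 = u1^2+u2^2 := Real.sq_sqrt (by positivity)
  have hb2 : b^2 = v1^2+v2^2 := Real.sq_sqrt (by positivity)
  have key : (u1+v1)^2+(u2+v2)^2 ≤ (a+b)^2 := by
    have cauchy : (u1*v1+u2*v2)^2 ≤ a^2*b^2 := by nlinarith [sq_nonneg (u1*v2-u2*v1)]
    have hdot : u1*v1+u2*v2 ≤ a*b := by nlinarith [mul_nonneg ha0 hb0]
    nlinarith
  calc Real.sqrt ((u1+v1)^2+(u2+v2)^2) ≤ Real.sqrt ((a+b)^2) := Real.sqrt_le_sqrt key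
    _ = a + b := Real.sqrt_sq (by linarith)

lemma sum3_sq' (u v w M : ℝ) (hu : u^2 ≤ M) (hv : v^2 ≤ M) (hw : w^2 ≤ M) :
    (u-v-w)^2 ≤ 9*M := by
  nlinarith [sq_nonneg (u+v), sq_nonneg (u+w), sq_nonneg (v-w)]

lemma pair_facts' (g : ℝ) (p q : H) (h0 : 0 < Hd p q)
    (hg : NH (Hmul (Hinv p) q) / Hd p q ≤ g) :
    NH (Hmul (Hinv p) q) ^ 4 ≤ g ^ 4 * Hd p q ^ 4 := by
  have hN := NH_nonneg' (Hmul (Hinv p) q)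
  have h1 : NH (Hmul (Hinv p) q) ≤ g * Hd p q := (div_le_iff₀ h0).mp hg
  calc NH (Hmul (Hinv p) q) ^ 4 ≤ (g * Hd p q)^4 := pow_le_pow_left₀ hN h1 4
    _ = g^4 * Hd p q ^4 := by ring


lemma aux1 (t : ℝ) (h0 : 0 ≤ t) (h : t ≤ 1/2) : 1 ≤ (1-t)*(1+t)^4 := by
  nlinarith [mul_nonneg h0 h0, mul_nonneg (mul_nonneg h0 h0) h0, sq_nonneg (1-t), sq_nonneg t]

lemma core (α r g a b c A B C Z : ℝ)
    (hα : 0 < α) (hr : 0 < r) (hg : 0 ≤ g)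
    (hA1 : α*r ≤ A) (hA2 : A ≤ r)
    (hB1 : α*r ≤ B) (hB2 : B ≤ r)
    (hC1 : α*r ≤ C) (hC2 : C ≤ r)
    (ha0 : 0 ≤ a) (hb0 : 0 ≤ b) (hc0 : 0 ≤ c)
    (haA : a^4 ≤ A^4) (hAa : A^4 ≤ a^4 + g^4*A^4)
    (hbB : b^4 ≤ B^4) (hBb : B^4 ≤ b^4 + g^4*B^4)
    (hcC : c^4 ≤ C^4) (hCc : C^4 ≤ c^4 + g^4*C^4)
    (htri1 : c ≤ a + b) (htri2 : a ≤ b + c) (htri3 : b ≤ a + c)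
    (hHeron : 16*Z^2 = 2*a^2*b^2+2*b^2*c^2+2*c^2*a^2-(a^2)^2-(b^2)^2-(c^2)^2)
    (hZ : Z^2 ≤ 9*g^4*r^4) :
    min (min (A+B-C) (A+C-B)) (C+B-A) ≤ (384/α^3+4)*g^4*r := by
  have hαr : 0 < α*r := mul_pos hα hr
  by_cases hcase : (1:ℝ)/2 ≤ g^4
  · have h1 : min (min (A+B-C) (A+C-B)) (C+B-A) ≤ A+B-C :=
      le_trans (min_le_left _ _) (min_le_left _ _)
    have h2 : A+B-C ≤ 2*r := by linarith
    have h3 : (0:ℝ) ≤ 384/α^3*g^4*r := by positivity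
    nlinarith
  · push_neg at hcase
    set s := α*r/2 with hs
    have hs0 : 0 < s := by positivity
    have hg4 : 0 ≤ g^4 := by positivity
    -- lower bounds on a,b,c
    have lower : ∀ x X : ℝ, 0 ≤ x → α*r ≤ X → X ≤ r → x^4 ≤ X^4 → X^4 ≤ x^4 + g^4*X^4 →
        s ≤ x ∧ X ≤ x + g^4*r ∧ x ≤ X := by
      intro x X hx0 hX1 hX2 hxX hXx
      have hX0 : 0 < X := lt_of_lt_of_le hαr hX1
      have hX4 : (α*r)^4 ≤ X^4 := pow_le_pow_left₀ hαr.le hX1 4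
      have hgx : g^4*X^4 ≤ (1/2)*X^4 :=
        mul_le_mul_of_nonneg_right hcase.le (pow_pos hX0 4).le
      have h2 : (1-g^4)*X^4 ≤ x^4 := by linarith
      have hsx : s ≤ x := by
        have h4 : s^4 ≤ x^4 := by
          have h5 : x^4 ≥ (1/2)*(α*r)^4 := by linarith
          have h6 : s^4 = (α*r)^4/16 := by rw [hs]; ring
          linarith [pow_pos hαr 4]
        exact le_of_pow_le_pow_left₀ (by norm_num) hx0 h4
      have hxle : x ≤ X := le_of_pow_le_pow_left₀ (by norm_num) hX0.le hxX
      have hXx' : X ≤ x*(1+g^4) := by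
        apply le_of_pow_le_pow_left₀ (n := 4) (by norm_num) (by positivity)
        have h1 : (1:ℝ) ≤ (1-g^4)*(1+g^4)^4 := aux1 _ hg4 hcase.le
        have hT : (0:ℝ) ≤ (1+g^4)^4 := by positivity
        calc X^4 = 1*X^4 := by ring
          _ ≤ ((1-g^4)*(1+g^4)^4)*X^4 :=
              mul_le_mul_of_nonneg_right h1 (pow_pos hX0 4).le
          _ = (1+g^4)^4*((1-g^4)*X^4) := by ring
          _ ≤ (1+g^4)^4*x^4 := mul_le_mul_of_nonneg_left h2 hT
          _ = (x*(1+g^4))^4 := by ring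
      refine ⟨hsx, ?_, hxle⟩
      have hxg : x*g^4 ≤ r*g^4 := mul_le_mul_of_nonneg_right (hxle.trans hX2) hg4
      linarith [hXx', hxg]
    obtain ⟨hsa, hAa', haA'⟩ := lower a A ha0 hA1 hA2 haA hAa
    obtain ⟨hsb, hBb', hbB'⟩ := lower b B hb0 hB1 hB2 hbB hBb
    obtain ⟨hsc, hCc', hcC'⟩ := lower c C hc0 hC1 hC2 hcC hCc
    set f1 := a + b - c with hf1
    set f2 := a + c - b with hf2
    set f3 := b + c - a with hf3
    have hf10 : 0 ≤ f1 := by rw [hf1]; linarith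
    have hf20 : 0 ≤ f2 := by rw [hf2]; linarith
    have hf30 : 0 ≤ f3 := by rw [hf3]; linarith
    set mf := min (min f1 f2) f3 with hmf
    have hmf1 : mf ≤ f1 := le_trans (min_le_left _ _) (min_le_left _ _)
    have hmf2 : mf ≤ f2 := le_trans (min_le_left _ _) (min_le_right _ _)
    have hmf3 : mf ≤ f3 := min_le_right _ _
    have habc : 3*s ≤ a + b + c := by linarith
    have main : ∀ F G H : ℝ, 0 ≤ F → F ≤ G → F ≤ H → s ≤ (F+G)/2 → s ≤ (F+H)/2 →
        (a+b+c)*(F*G*H) = 16*Z^2 → F ≤ 384/α^3*g^4*r := by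
      intro F G Hh hF hFG hFH hpG hpH hprod
      have hG : s ≤ G := by linarith
      have hH : s ≤ Hh := by linarith
      have hGH : s*s ≤ G*Hh := mul_le_mul hG hH hs0.le (le_trans hs0.le hG)
      have h1 : (3*s)*(s*s) ≤ (a+b+c)*(G*Hh) := mul_le_mul habc hGH (by positivity) (by linarith)
      have h2 : F*((3*s)*(s*s)) ≤ F*((a+b+c)*(G*Hh)) := mul_le_mul_of_nonneg_left h1 hF
      have h3 : F*((a+b+c)*(G*Hh)) = 16*Z^2 := by rw [← hprod]; ring
      have h4 : F*((3*s)*(s*s)) ≤ 144*g^4*r^4 := by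
        rw [h3] at h2; linarith
      have h5 : F*α^3*r^3 ≤ (384*g^4*r)*r^3 := by
        rw [hs] at h4; linarith
      have h6 : F*α^3 ≤ 384*g^4*r := le_of_mul_le_mul_right (by linarith) (pow_pos hr 3)
      rw [show 384/α^3*g^4*r = 384*g^4*r/α^3 by ring, le_div_iff₀ (pow_pos hα 3)]
      linarith
    have hprodsym : (a+b+c)*(f1*f2*f3) = 16*Z^2 := by
      rw [hf1, hf2, hf3, hHeron]; ring
    have hm : mf ≤ 384/α^3*g^4*r := by
      rcases min_cases (min f1 f2) f3 with ⟨he, _⟩ | ⟨he, hle⟩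
      · rcases min_cases f1 f2 with ⟨he2, hle2⟩ | ⟨he2, hle2⟩
        · rw [hmf, he, he2]
          rw [hmf, he, he2] at hmf3
          exact main f1 f2 f3 hf10 hle2 hmf3
            (by rw [hf1, hf2]; linarith) (by rw [hf1, hf3]; linarith)
            hprodsym
        · rw [hmf, he, he2]
          rw [hmf, he, he2] at hmf3
          exact main f2 f1 f3 hf20 hle2.le hmf3
            (by rw [hf1, hf2]; linarith) (by rw [hf2, hf3]; linarith)
            (by rw [← hprodsym]; ring)
      · rw [hmf, he]
        have h1 : f3 ≤ f1 := le_trans hle.le (min_le_left _ _)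
        have h2 : f3 ≤ f2 := le_trans hle.le (min_le_right _ _)
        exact main f3 f1 f2 hf30 h1 h2
          (by rw [hf1, hf3]; linarith) (by rw [hf2, hf3]; linarith)
          (by rw [← hprodsym]; ring)
    have hX1 : A+B-C ≤ f1 + 2*(g^4*r) := by rw [hf1]; linarith
    have hX2 : A+C-B ≤ f2 + 2*(g^4*r) := by rw [hf2]; linarith
    have hX3 : C+B-A ≤ f3 + 2*(g^4*r) := by rw [hf3]; linarith
    have hmm : min (min (A+B-C) (A+C-B)) (C+B-A) ≤ mf + 2*(g^4*r) := by
      rw [hmf, ← min_add_add_right, ← min_add_add_right]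
      exact min_le_min (min_le_min hX1 hX2) hX3
    have hgr : 0 ≤ g^4*r := by positivity
    linarith

/-- The excess `∂(p₁,p₂,p₃)` is bounded by `c₁ γ₁⁴ r` on `Σ(α, r)`. -/
theorem excess_bound_gamma :
    ∀ α : ℝ, 0 < α → α < 1 →
      ∃ c₁ > 0, ∀ (p₁ p₂ p₃ : H) (r : ℝ), 0 < r →
        α * r ≤ Hd p₁ p₂ → Hd p₁ p₂ ≤ r →
        α * r ≤ Hd p₂ p₃ → Hd p₂ p₃ ≤ r →
        α * r ≤ Hd p₁ p₃ → Hd p₁ p₃ ≤ r →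
        min (min (Hd p₁ p₂ + Hd p₂ p₃ - Hd p₁ p₃) (Hd p₁ p₂ + Hd p₁ p₃ - Hd p₂ p₃))
            (Hd p₁ p₃ + Hd p₂ p₃ - Hd p₁ p₂)
          ≤ c₁ * (max (max (NH (Hmul (Hinv p₁) p₂) / Hd p₁ p₂)
                           (NH (Hmul (Hinv p₂) p₃) / Hd p₂ p₃))
                      (NH (Hmul (Hinv p₁) p₃) / Hd p₁ p₃)) ^ 4 * r := by
  intro α hα hα1
  refine ⟨384/α^3 + 4, by positivity, ?_⟩
  rintro ⟨x1, y1, z1⟩ ⟨x2, y2, z2⟩ ⟨x3, y3, z3⟩ r hr hA1 hA2 hB1 hB2 hC1 hC2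
  have hαr : 0 < α * r := mul_pos hα hr
  set g := max (max (NH (Hmul (Hinv (x1, y1, z1)) (x2, y2, z2)) / Hd (x1, y1, z1) (x2, y2, z2))
      (NH (Hmul (Hinv (x2, y2, z2)) (x3, y3, z3)) / Hd (x2, y2, z2) (x3, y3, z3)))
      (NH (Hmul (Hinv (x1, y1, z1)) (x3, y3, z3)) / Hd (x1, y1, z1) (x3, y3, z3)) with hgdef
  have hA0 : 0 < Hd (x1, y1, z1) (x2, y2, z2) := lt_of_lt_of_le hαr hA1
  have hB0 : 0 < Hd (x2, y2, z2) (x3, y3, z3) := lt_of_lt_of_le hαr hB1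
  have hC0 : 0 < Hd (x1, y1, z1) (x3, y3, z3) := lt_of_lt_of_le hαr hC1
  have hg0 : 0 ≤ g :=
    le_trans (div_nonneg (NH_nonneg' (Hmul (Hinv (x1, y1, z1)) (x2, y2, z2))) hA0.le)
      (by rw [hgdef]; exact le_trans (le_max_left _ _) (le_max_left _ _))
  -- the three NH⁴ bounds
  have hw12 : NH (Hmul (Hinv (x1, y1, z1)) (x2, y2, z2)) ^ 4
      ≤ g ^ 4 * Hd (x1, y1, z1) (x2, y2, z2) ^ 4 :=
    pair_facts' g _ _ hA0 (by rw [hgdef]; exact le_trans (le_max_left _ _) (le_max_left _ _))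
  have hw23 : NH (Hmul (Hinv (x2, y2, z2)) (x3, y3, z3)) ^ 4
      ≤ g ^ 4 * Hd (x2, y2, z2) (x3, y3, z3) ^ 4 :=
    pair_facts' g _ _ hB0 (by rw [hgdef]; exact le_trans (le_max_right _ _) (le_max_left _ _))
  have hw13 : NH (Hmul (Hinv (x1, y1, z1)) (x3, y3, z3)) ^ 4
      ≤ g ^ 4 * Hd (x1, y1, z1) (x3, y3, z3) ^ 4 :=
    pair_facts' g _ _ hC0 (by rw [hgdef]; exact le_max_right _ _)
  -- rewrite NH⁴ as squares of vertical components
  have hn12 : NH (Hmul (Hinv (x1, y1, z1)) (x2, y2, z2)) ^ 4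
      = (z2-z1+(y1*x2-x1*y2)/2)^2 := by rw [NH_pow4']; simp [Hmul, Hinv]; ring
  have hn23 : NH (Hmul (Hinv (x2, y2, z2)) (x3, y3, z3)) ^ 4
      = (z3-z2+(y2*x3-x2*y3)/2)^2 := by rw [NH_pow4']; simp [Hmul, Hinv]; ring
  have hn13 : NH (Hmul (Hinv (x1, y1, z1)) (x3, y3, z3)) ^ 4
      = (z3-z1+(y1*x3-x1*y3)/2)^2 := by rw [NH_pow4']; simp [Hmul, Hinv]; ring
  rw [hn12] at hw12; rw [hn23] at hw23; rw [hn13] at hw13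
  -- metric fourth powers
  have hD12 : Hd (x1, y1, z1) (x2, y2, z2) ^ 4
      = ((x2-x1)^2+(y2-y1)^2)^2 + (z2-z1+(y1*x2-x1*y2)/2)^2 := by
    rw [Hd, KN_pow4']; simp [Hmul, Hinv]; ring
  have hD23 : Hd (x2, y2, z2) (x3, y3, z3) ^ 4
      = ((x3-x2)^2+(y3-y2)^2)^2 + (z3-z2+(y2*x3-x2*y3)/2)^2 := by
    rw [Hd, KN_pow4']; simp [Hmul, Hinv]; ring
  have hD13 : Hd (x1, y1, z1) (x3, y3, z3) ^ 4
      = ((x3-x1)^2+(y3-y1)^2)^2 + (z3-z1+(y1*x3-x1*y3)/2)^2 := by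
    rw [Hd, KN_pow4']; simp [Hmul, Hinv]; ring
  -- horizontal (planar) distances
  set a := Real.sqrt ((x2-x1)^2+(y2-y1)^2) with hadef
  set b := Real.sqrt ((x3-x2)^2+(y3-y2)^2) with hbdef
  set c := Real.sqrt ((x3-x1)^2+(y3-y1)^2) with hcdef
  have ha0 : 0 ≤ a := Real.sqrt_nonneg _
  have hb0 : 0 ≤ b := Real.sqrt_nonneg _
  have hc0 : 0 ≤ c := Real.sqrt_nonneg _
  have ha2 : a^2 = (x2-x1)^2+(y2-y1)^2 := Real.sq_sqrt (by positivity)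
  have hb2 : b^2 = (x3-x2)^2+(y3-y2)^2 := Real.sq_sqrt (by positivity)
  have hc2 : c^2 = (x3-x1)^2+(y3-y1)^2 := Real.sq_sqrt (by positivity)
  have ha4 : a^4 = ((x2-x1)^2+(y2-y1)^2)^2 := by rw [show a^4 = (a^2)^2 from by ring, ha2]
  have hb4 : b^4 = ((x3-x2)^2+(y3-y2)^2)^2 := by rw [show b^4 = (b^2)^2 from by ring, hb2]
  have hc4 : c^4 = ((x3-x1)^2+(y3-y1)^2)^2 := by rw [show c^4 = (c^2)^2 from by ring, hc2]
  -- triangle inequalities in the plane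
  have htri1 : c ≤ a + b := by
    rw [hcdef, hadef, hbdef,
      show (x3-x1)^2+(y3-y1)^2 = ((x2-x1)+(x3-x2))^2+((y2-y1)+(y3-y2))^2 from by ring]
    exact sqrt_tri' _ _ _ _
  have htri2 : a ≤ b + c := by
    rw [hadef, hbdef, hcdef,
      show (x2-x1)^2+(y2-y1)^2 = ((x2-x3)+(x3-x1))^2+((y2-y3)+(y3-y1))^2 from by ring,
      show (x3-x2)^2+(y3-y2)^2 = (x2-x3)^2+(y2-y3)^2 from by ring]
    exact sqrt_tri' _ _ _ _
  have htri3 : b ≤ a + c := by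
    rw [hadef, hbdef, hcdef,
      show (x3-x2)^2+(y3-y2)^2 = ((x1-x2)+(x3-x1))^2+((y1-y2)+(y3-y1))^2 from by ring,
      show (x2-x1)^2+(y2-y1)^2 = (x1-x2)^2+(y1-y2)^2 from by ring]
    exact sqrt_tri' _ _ _ _
  -- Heron identity for Z
  set Z := (z3-z1+(y1*x3-x1*y3)/2) - (z2-z1+(y1*x2-x1*y2)/2) - (z3-z2+(y2*x3-x2*y3)/2)
    with hZdef
  have hHeron : 16*Z^2 = 2*a^2*b^2+2*b^2*c^2+2*c^2*a^2-(a^2)^2-(b^2)^2-(c^2)^2 := by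
    rw [ha2, hb2, hc2, hZdef]; ring
  -- bound on Z²
  have hr4 : ∀ D : H → H → ℝ, True := fun _ => trivial
  have hDr12 : Hd (x1, y1, z1) (x2, y2, z2) ^ 4 ≤ r^4 :=
    pow_le_pow_left₀ hA0.le hA2 4
  have hDr23 : Hd (x2, y2, z2) (x3, y3, z3) ^ 4 ≤ r^4 :=
    pow_le_pow_left₀ hB0.le hB2 4
  have hDr13 : Hd (x1, y1, z1) (x3, y3, z3) ^ 4 ≤ r^4 :=
    pow_le_pow_left₀ hC0.le hC2 4
  have hg4 : (0:ℝ) ≤ g^4 := by positivity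
  have hw12r : (z2-z1+(y1*x2-x1*y2)/2)^2 ≤ g^4*r^4 :=
    le_trans hw12 (mul_le_mul_of_nonneg_left hDr12 hg4)
  have hw23r : (z3-z2+(y2*x3-x2*y3)/2)^2 ≤ g^4*r^4 :=
    le_trans hw23 (mul_le_mul_of_nonneg_left hDr23 hg4)
  have hw13r : (z3-z1+(y1*x3-x1*y3)/2)^2 ≤ g^4*r^4 :=
    le_trans hw13 (mul_le_mul_of_nonneg_left hDr13 hg4)
  have hZ2 : Z^2 ≤ 9*g^4*r^4 := by
    rw [hZdef]
    have := sum3_sq' _ _ _ (g^4*r^4) hw13r hw12r hw23r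
    linarith
  -- fourth-power comparisons between planar and Korányi distances
  have hsplitA : Hd (x1, y1, z1) (x2, y2, z2) ^ 4 = a^4 + (z2-z1+(y1*x2-x1*y2)/2)^2 := by
    rw [hD12, ha4]
  have hsplitB : Hd (x2, y2, z2) (x3, y3, z3) ^ 4 = b^4 + (z3-z2+(y2*x3-x2*y3)/2)^2 := by
    rw [hD23, hb4]
  have hsplitC : Hd (x1, y1, z1) (x3, y3, z3) ^ 4 = c^4 + (z3-z1+(y1*x3-x1*y3)/2)^2 := by
    rw [hD13, hc4]
  have haA : a^4 ≤ Hd (x1, y1, z1) (x2, y2, z2) ^ 4 := by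
    linarith [hsplitA, sq_nonneg (z2-z1+(y1*x2-x1*y2)/2)]
  have hbB : b^4 ≤ Hd (x2, y2, z2) (x3, y3, z3) ^ 4 := by
    linarith [hsplitB, sq_nonneg (z3-z2+(y2*x3-x2*y3)/2)]
  have hcC : c^4 ≤ Hd (x1, y1, z1) (x3, y3, z3) ^ 4 := by
    linarith [hsplitC, sq_nonneg (z3-z1+(y1*x3-x1*y3)/2)]
  have hAa : Hd (x1, y1, z1) (x2, y2, z2) ^ 4
      ≤ a^4 + g^4 * Hd (x1, y1, z1) (x2, y2, z2) ^ 4 := by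
    linarith [hsplitA, hw12]
  have hBb : Hd (x2, y2, z2) (x3, y3, z3) ^ 4
      ≤ b^4 + g^4 * Hd (x2, y2, z2) (x3, y3, z3) ^ 4 := by
    linarith [hsplitB, hw23]
  have hCc : Hd (x1, y1, z1) (x3, y3, z3) ^ 4
      ≤ c^4 + g^4 * Hd (x1, y1, z1) (x3, y3, z3) ^ 4 := by
    linarith [hsplitC, hw13]
  exact core α r g a b c _ _ _ Z hα hr hg0 hA1 hA2 hB1 hB2 hC1 hC2
    ha0 hb0 hc0 haA hAa hbB hBb hcC hCc htri1 htri2 htri3 hHeron hZ2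
end
end
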